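/- Let m be a positive integer, 0 < ε < 1, 0 < δ < 1, and let G_1, …, G_m be independent identically distributed real-valued random variables on a probability space such that P(G_i < q) = 1 − ε and P(G_i = q) = 0 for a fixed real number q. Suppose j* = min{ j ∈ {1, …, m} : Σ_{k=0}^{j−1} C(m,k) (1−ε)^k ε^{m−k} ≥ 1 − δ } exists. Then for every j ∈ {1, …, m} with j < j*, one has P(G_(j) ≥ q) < 1 − δ; hence G_(j*) is the smallest order statistic that upper-bounds the (1−ε)-quantile q with confidence at least 1 − δ. -/

import Mathlib

/-!
If `G_(j) ≥ q` then, the sorted tuple being monotone, at most `j` of the `G i` lie below `q`.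
The events `{G i < q}` are independent with probability `1 − ε`, so the number of them that occur
is binomial and `P(G_(j) ≥ q) ≤ Σ_{k ≤ j} C(m,k) (1−ε)^k ε^(m−k)`, which is `< 1 − δ` for
`j < jstar` by minimality of `jstar`.
-/

open MeasureTheory ProbabilityTheory Finset
open scoped ENNReal

theorem Tuple.lt_card_filter_lt_iff_apply_sort_lt {n : ℕ} {α : Type*} [LinearOrder α]
    (f : Fin n → α) (j : Fin n) (a : α) :
    j < #{i | f i < a} ↔ f (sort f j) < a := by
  rw [card_equiv (t := {i | f (sort f i) < a}) (sort f).symm (by simp)]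
  exact lt_card_lt_iff_apply_lt_of_monotone (f := f ∘ sort f) (monotone_sort f)

section CountingEvents

variable {Ω ι : Type*} [Fintype ι] {A : ι → Set Ω} [∀ i, DecidablePred (· ∈ A i)]

lemma Set.setOf_filter_mem_eq_iInter [DecidableEq ι] (S : Finset ι) :
    {ω | ({i | ω ∈ A i} : Finset ι) = S} = ⋂ i, if i ∈ S then A i else (A i)ᶜ := by
  ext ω
  simp only [Set.mem_ofPred_eq, Set.mem_iInter, Finset.ext_iff, mem_filter]
  refine forall_congr' fun i => ?_
  split_ifs with hi <;> simp [hi]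

lemma measurable_card_filter_mem [MeasurableSpace Ω] (hAm : ∀ i, MeasurableSet (A i)) :
    Measurable fun ω => #{i | ω ∈ A i} := by
  simp_rw [card_filter]
  exact Finset.measurable_sum _ fun i _ => Measurable.ite (hAm i) measurable_const measurable_const

end CountingEvents

namespace ProbabilityTheory

lemma iIndepFun.iIndepSet_preimage {Ω ι β : Type*} [MeasurableSpace Ω] {μ : Measure Ω}
    [MeasurableSpace β] {X : ι → Ω → β} (h : iIndepFun X μ) {s : ι → Set β}
    (hs : ∀ i, MeasurableSet (s i)) :
    iIndepSet (fun i => X i ⁻¹' s i) μ :=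
  (iIndepSet_iff_iIndep _ _).2 <| iIndep_of_iIndep_of_le ((iIndepFun_iff_iIndep _ _ _).1 h)
    fun i => MeasurableSpace.generateFrom_le <| by
      rintro _ rfl
      exact ⟨s i, hs i, rfl⟩

namespace iIndepSet

variable {Ω ι : Type*} [MeasurableSpace Ω] {μ : Measure Ω} [Fintype ι] {A : ι → Set Ω}
  [∀ i, DecidablePred (· ∈ A i)] {p : ℝ≥0∞}

lemma measure_filter_mem_eq [DecidableEq ι] (hAm : ∀ i, MeasurableSet (A i))
    (hA : iIndepSet A μ) (hp : ∀ i, μ (A i) = p) (S : Finset ι) :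
    μ {ω | ({i | ω ∈ A i} : Finset ι) = S} = p ^ #S * (1 - p) ^ (Fintype.card ι - #S) := by
  have := hA.isProbabilityMeasure
  have hgen : ∀ i, MeasurableSet[MeasurableSpace.generateFrom {A i}]
      (if i ∈ S then A i else (A i)ᶜ) := fun i => by
    have hAi := MeasurableSpace.measurableSet_generateFrom (Set.mem_singleton (A i))
    split_ifs
    exacts [hAi, hAi.compl]
  rw [Set.setOf_filter_mem_eq_iInter, ((iIndepSet_iff_iIndep _ _).1 hA).meas_iInter hgen,
    ← prod_mul_prod_compl S]
  congr 1
  · rw [prod_congr rfl fun i hi => by rw [if_pos hi, hp i], prod_const]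
  · rw [prod_congr rfl fun i hi => by
      rw [if_neg (mem_compl.1 hi), prob_compl_eq_one_sub (hAm i), hp i], prod_const, card_compl]

lemma measure_card_filter_mem_eq (hAm : ∀ i, MeasurableSet (A i)) (hA : iIndepSet A μ)
    (hp : ∀ i, μ (A i) = p) (k : ℕ) :
    μ {ω | #{i | ω ∈ A i} = k} =
      (Fintype.card ι).choose k * p ^ k * (1 - p) ^ (Fintype.card ι - k) := by
  classical
  have hunion : {ω | #{i | ω ∈ A i} = k} =
      ⋃ S ∈ powersetCard k univ, {ω | ({i | ω ∈ A i} : Finset ι) = S} := by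
    ext ω
    simp
  have hdisj : (powersetCard k (univ : Finset ι) : Set (Finset ι)).PairwiseDisjoint
      fun S => {ω | ({i | ω ∈ A i} : Finset ι) = S} :=
    fun S _ T _ hST => Set.disjoint_left.2 fun ω hS hT => hST (hS.symm.trans hT)
  rw [hunion, measure_biUnion_finset hdisj fun S _ => by
    rw [Set.setOf_filter_mem_eq_iInter]
    exact .iInter fun i => by split_ifs; exacts [hAm i, (hAm i).compl]]
  rw [sum_congr rfl fun S hS => by rw [hA.measure_filter_mem_eq hAm hp, (mem_powersetCard.1 hS).2],
    sum_const, card_powersetCard, card_univ, nsmul_eq_mul, mul_assoc]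

lemma measure_card_filter_mem_le (hAm : ∀ i, MeasurableSet (A i)) (hA : iIndepSet A μ)
    (hp : ∀ i, μ (A i) = p) (j : ℕ) :
    μ {ω | #{i | ω ∈ A i} ≤ j} = ∑ k ∈ range (j + 1),
      (Fintype.card ι).choose k * p ^ k * (1 - p) ^ (Fintype.card ι - k) := by
  have hunion : {ω | #{i | ω ∈ A i} ≤ j} = ⋃ k ∈ range (j + 1), {ω | #{i | ω ∈ A i} = k} := by
    ext ω
    simp
  have hdisj : (range (j + 1) : Set ℕ).PairwiseDisjoint fun k => {ω | #{i | ω ∈ A i} = k} :=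
    fun k _ l _ hkl => Set.disjoint_left.2 fun ω hk hl => hkl (hk.symm.trans hl)
  rw [hunion, measure_biUnion_finset hdisj fun k _ => ?_]
  · exact sum_congr rfl fun k _ => hA.measure_card_filter_mem_eq hAm hp k
  · exact measurable_card_filter_mem hAm (measurableSet_singleton k)

end iIndepSet

end ProbabilityTheory

theorem prob_order_stat_lt_jstar_lt_confidence_general
    {Ω : Type*} [MeasurableSpace Ω] (μ : Measure Ω) [IsProbabilityMeasure μ]
    (m : ℕ) (ε δ : ℝ) (hε0 : 0 < ε) (hε1 : ε < 1)
    (hδ1 : δ < 1) (q : ℝ)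
    (G : Fin m → Ω → ℝ) (hGmeas : ∀ i, Measurable (G i))
    (hindep : iIndepFun G μ)
    (hlt : ∀ i, μ {ω | G i ω < q} = ENNReal.ofReal (1 - ε))
    (jstar : Fin m)
    (hjstar : IsLeast {j : Fin m |
      1 - δ ≤ ∑ k ∈ Finset.range ((j : ℕ) + 1),
        (m.choose k : ℝ) * (1 - ε) ^ k * ε ^ (m - k)} jstar) :
    ∀ j : Fin m, j < jstar →
      μ {ω | q ≤ G (Tuple.sort (fun i => G i ω) j) ω} < ENNReal.ofReal (1 - δ) := by
  intro j hj
  have hsum : ∑ k ∈ range ((j : ℕ) + 1), (m.choose k : ℝ) * (1 - ε) ^ k * ε ^ (m - k) < 1 - δ :=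
    not_le.1 fun h => (hjstar.2 h).not_gt hj
  have hε1' : 0 ≤ 1 - ε := by linarith
  have hε : 1 - ENNReal.ofReal (1 - ε) = ENNReal.ofReal ε := by
    rw [← ENNReal.ofReal_one, ← ENNReal.ofReal_sub _ hε1', sub_sub_cancel]
  have hA : iIndepSet (fun i => {ω | G i ω < q}) μ :=
    hindep.iIndepSet_preimage fun _ => measurableSet_Iio
  calc μ {ω | q ≤ G (Tuple.sort (fun i => G i ω) j) ω}
      ≤ μ {ω | #{i | ω ∈ {ω | G i ω < q}} ≤ (j : ℕ)} := measure_mono fun ω (hω : q ≤ _) =>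
        not_lt.1 fun h => hω.not_gt ((Tuple.lt_card_filter_lt_iff_apply_sort_lt _ j q).1 h)
    _ = ENNReal.ofReal
          (∑ k ∈ range ((j : ℕ) + 1), (m.choose k : ℝ) * (1 - ε) ^ k * ε ^ (m - k)) := by
      rw [hA.measure_card_filter_mem_le (fun i => measurableSet_lt (hGmeas i) measurable_const)
        hlt, hε, ENNReal.ofReal_sum_of_nonneg fun k _ => by positivity, Fintype.card_fin]
      refine sum_congr rfl fun k _ => ?_
      rw [ENNReal.ofReal_mul (by positivity), ENNReal.ofReal_mul (by positivity),
        ENNReal.ofReal_natCast, ENNReal.ofReal_pow hε1', ENNReal.ofReal_pow hε0.le]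
    _ < ENNReal.ofReal (1 - δ) := (ENNReal.ofReal_lt_ofReal_iff (by linarith)).2 hsum

/-- With `G 0, …, G (m-1)` i.i.d. real random variables such that
`P(G i < q) = 1 − ε` and `P(G i = q) = 0`, suppose `jstar` is the least index `j`
(0-indexed; `j+1` in the paper's 1-indexed convention) such that
`Σ_{k=0}^{j} C(m,k)(1−ε)^k ε^{m−k} ≥ 1 − δ`.  Then for every `j < jstar`, the `j`-th
order statistic (realized via `Tuple.sort`) satisfies `P(G_(j) ≥ q) < 1 − δ`; hence
`G_(jstar)` is the smallest order statistic upper-bounding the `(1−ε)`-quantile `q`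
with confidence at least `1 − δ`. -/
theorem prob_order_stat_lt_jstar_lt_confidence
    {Ω : Type*} [MeasurableSpace Ω] (μ : Measure Ω) [IsProbabilityMeasure μ]
    (m : ℕ) (hm : 0 < m) (ε δ : ℝ) (hε0 : 0 < ε) (hε1 : ε < 1)
    (hδ0 : 0 < δ) (hδ1 : δ < 1) (q : ℝ)
    (G : Fin m → Ω → ℝ) (hGmeas : ∀ i, Measurable (G i))
    (hindep : iIndepFun G μ)
    (hident : ∀ i j, IdentDistrib (G i) (G j) μ μ)
    (hlt : ∀ i, μ {ω | G i ω < q} = ENNReal.ofReal (1 - ε))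
    (heq : ∀ i, μ {ω | G i ω = q} = 0)
    (jstar : Fin m)
    (hjstar : IsLeast {j : Fin m |
      1 - δ ≤ ∑ k ∈ Finset.range ((j : ℕ) + 1),
        (m.choose k : ℝ) * (1 - ε) ^ k * ε ^ (m - k)} jstar) :
    ∀ j : Fin m, j < jstar →
      μ {ω | q ≤ G (Tuple.sort (fun i => G i ω) j) ω} < ENNReal.ofReal (1 - δ) :=
  prob_order_stat_lt_jstar_lt_confidence_general μ m ε δ hε0 hε1 hδ1 q G hGmeas hindep hlt jstar
    hjstar
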